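/- Let d ≥ 2 and G ≤ Aut(T_d) be a strongly fractal group (i.e., G is self-similar and for each i the projection of ψ(St_G(1)) to the i-th coordinate is all of G). Then the set of left Engel elements of G that lie in St_G(1) equals the set of h ∈ St_G(1) all of whose first-level sections are left Engel elements of G. -/

import Mathlib

/-- Vertices of the rooted `d`-adic tree `T_d` are finite words over `Fin d`. -/
abbrev Vertex (d : ℕ) : Type := List (Fin d)

/-- A permutation of the vertices of `T_d` is a tree automorphism iff it (and its
inverse) preserves word length (levels) and the prefix relation (adjacency). -/
def IsTreeAut (d : ℕ) (e : Equiv.Perm (Vertex d)) : Prop :=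
  (∀ l, (e l).length = l.length) ∧ (∀ l, (e.symm l).length = l.length) ∧
    (∀ l₁ l₂ : Vertex d, l₁ <+: l₂ → e l₁ <+: e l₂) ∧
    (∀ l₁ l₂ : Vertex d, l₁ <+: l₂ → e.symm l₁ <+: e.symm l₂)

/-- The group `Aut T_d` of automorphisms of the rooted `d`-adic tree. -/
def treeAutGroup (d : ℕ) : Subgroup (Equiv.Perm (Vertex d)) where
  carrier := {e | IsTreeAut d e}
  one_mem' := ⟨fun _ => rfl, fun _ => rfl, fun _ _ h => h, fun _ _ h => h⟩
  mul_mem' := by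
    rintro a b ⟨ha1, ha2, ha3, ha4⟩ ⟨hb1, hb2, hb3, hb4⟩
    exact ⟨fun l => by simp [Equiv.Perm.mul_def, ha1, hb1],
      fun l => by simp [Equiv.Perm.mul_def, ha2, hb2],
      fun l₁ l₂ h => by simpa [Equiv.Perm.mul_def] using ha3 _ _ (hb3 _ _ h),
      fun l₁ l₂ h => by simpa [Equiv.Perm.mul_def] using hb4 _ _ (ha4 _ _ h)⟩
  inv_mem' := by
    rintro a ⟨ha1, ha2, ha3, ha4⟩
    exact ⟨ha2, fun l => by exact ha1 l,
      ha4, fun l₁ l₂ h => by exact ha3 _ _ h⟩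

/-- The `n`-th level stabilizer `St(n)` in `Aut T_d`: automorphisms fixing every
vertex of the first `n` levels. -/
def levelStab (d n : ℕ) : Subgroup (treeAutGroup d) where
  carrier := {g | ∀ l : Vertex d, l.length ≤ n → g.val l = l}
  one_mem' := fun _ _ => rfl
  mul_mem' := by
    intro a b ha hb l hl
    have : ((a * b : treeAutGroup d) : Equiv.Perm (Vertex d)) l = a.val (b.val l) := rfl
    rw [this, hb l hl, ha l hl]
  inv_mem' := by
    intro a ha l hl
    have h := ha l hl
    have : ((a⁻¹ : treeAutGroup d) : Equiv.Perm (Vertex d)) l = a.val⁻¹ l := rfl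
    rw [this]
    calc a.val⁻¹ l = a.val⁻¹ (a.val l) := by rw [h]
    _ = l := by simp

/-- `t` is the section of `g` at the first-level vertex `i`: for some first-level
vertex `j` (the image of `i` under `g`), `g (i w) = j (t w)` for all words `w`.
This uniquely determines `t`, and corresponds to the `i`-th component of the
canonical isomorphism `ψ : St(1) → (Aut T_d)^d` when `g ∈ St(1)` (where `j = i`). -/
def IsSection {d : ℕ} (g t : treeAutGroup d) (i : Fin d) : Prop :=
  ∃ j : Fin d, ∀ w : Vertex d, g.val (i :: w) = j :: t.val w

/-- Iterated commutator `[x, g, ..., g]` (with `n` copies of `g`), where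
`[x,g] = x⁻¹g⁻¹xg`, `engel x g 0 = x`. -/
def engel {G : Type*} [Group G] (x g : G) : ℕ → G
  | 0 => x
  | n + 1 => (engel x g n)⁻¹ * g⁻¹ * engel x g n * g

/-- `g` is a left Engel element of the subgroup `G`: for every `x ∈ G` some
iterated commutator `[x, g, ..., g]` is trivial. -/
def IsLeftEngelIn {X : Type*} [Group X] (G : Subgroup X) (g : X) : Prop :=
  ∀ x ∈ G, ∃ n, 1 ≤ n ∧ engel x g n = 1

/-!
Write `ψᵢ` for the section map at the first-level vertex `i`. On `St(1)` it is multiplicative,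
so `ψᵢ [x, h, …, h] = [ψᵢ x, ψᵢ h, …, ψᵢ h]`. If `h ∈ St_G(1)` is left Engel, every `x ∈ G` is
`ψᵢ a` for some `a ∈ St_G(1)` by strong fractality, and an iterated commutator `[a, h, …, h] = 1`
projects to `[x, ψᵢ h, …, ψᵢ h] = 1`. Conversely, for `x ∈ G` the commutator `y = [x, h]` lies in
`St_G(1)`; its sections lie in `G`, so `[ψᵢ y, ψᵢ h, …, ψᵢ h]` vanishes for all `i` once the
length is the largest of the `d` Engel lengths, and an element of `St(1)` with trivial sections
is trivial. Hence `[x, h, …, h] = [y, h, …, h] = 1`.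
-/

section Engel

variable {X : Type*} [Group X]

lemma engel_mem {G : Subgroup X} {x g : X} (hx : x ∈ G) (hg : g ∈ G) (n : ℕ) :
    engel x g n ∈ G := by
  induction n with
  | zero => exact hx
  | succ n ih => exact G.mul_mem (G.mul_mem (G.mul_mem (G.inv_mem ih) (G.inv_mem hg)) ih) hg

lemma engel_eq_one_of_le {x g : X} {m n : ℕ} (h : engel x g m = 1) (hmn : m ≤ n) :
    engel x g n = 1 := by
  induction n, hmn using Nat.le_induction with
  | base => exact h
  | succ n _ ih => simp [engel, ih]

lemma engel_succ_eq_engel_engel_one (x g : X) (n : ℕ) :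
    engel x g (n + 1) = engel (engel x g 1) g n := by
  induction n with
  | zero => rfl
  | succ n ih => rw [engel, ih]; rfl

lemma exists_forall_engel_eq_one {ι : Type*} [Finite ι] {x g : ι → X}
    (h : ∀ i, ∃ n, engel (x i) (g i) n = 1) : ∃ N, ∀ i, engel (x i) (g i) N = 1 := by
  have := Fintype.ofFinite ι
  choose n hn using h
  exact ⟨Finset.univ.sup n, fun i => engel_eq_one_of_le (hn i) (Finset.le_sup (Finset.mem_univ i))⟩

end Engel

namespace TreeAut

variable {d : ℕ}

lemma apply_nil (g : treeAutGroup d) : g.val ([] : Vertex d) = [] :=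
  List.length_eq_zero_iff.mp (g.2.1 [])

instance levelStab_normal (n : ℕ) : (levelStab d n).Normal where
  conj_mem h hh g l hl := by
    change g.val (h.val (g.val.symm l)) = l
    rw [hh _ ((g.2.2.1 l).trans_le hl)]
    exact g.val.apply_symm_apply l

/-- `t` is the section of `g` at a first-level vertex `i` fixed by `g`; for `g ∈ St(1)` this says
`t = (ψ g)ᵢ`. -/
def IsFixedSection (g t : treeAutGroup d) (i : Fin d) : Prop :=
  ∀ w : Vertex d, g.val (i :: w) = i :: t.val w

lemma IsSection.isFixedSection {g t : treeAutGroup d} {i : Fin d}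
    (hg : g ∈ levelStab d 1) (h : IsSection g t i) : IsFixedSection g t i := by
  obtain ⟨j, hj⟩ := h
  have hji : j = i := by
    have h0 := hj []
    rw [apply_nil, hg [i] (by simp)] at h0
    exact (List.cons_eq_cons.mp h0).1.symm
  exact hji ▸ hj

namespace IsFixedSection

lemma one (i : Fin d) : IsFixedSection (1 : treeAutGroup d) 1 i := fun _ => rfl

lemma mul {a b x y : treeAutGroup d} {i : Fin d}
    (ha : IsFixedSection a x i) (hb : IsFixedSection b y i) :
    IsFixedSection (a * b) (x * y) i := fun w => by
  change a.val (b.val (i :: w)) = i :: x.val (y.val w)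
  rw [hb, ha]

lemma inv {a x : treeAutGroup d} {i : Fin d} (ha : IsFixedSection a x i) :
    IsFixedSection a⁻¹ x⁻¹ i := fun w => by
  change a.val⁻¹ (i :: w) = i :: x.val⁻¹ w
  rw [Equiv.Perm.inv_eq_iff_eq, ha]
  exact congrArg _ (x.val.apply_symm_apply w).symm

lemma engel {a b x y : treeAutGroup d} {i : Fin d}
    (ha : IsFixedSection a x i) (hb : IsFixedSection b y i) (n : ℕ) :
    IsFixedSection (engel a b n) (engel x y n) i := by
  induction n with
  | zero => exact ha
  | succ n ih => exact (((ih.inv).mul hb.inv).mul ih).mul hb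

lemma unique {g t t' : treeAutGroup d} {i : Fin d}
    (h : IsFixedSection g t i) (h' : IsFixedSection g t' i) : t = t' :=
  Subtype.ext <| Equiv.ext fun w => (List.cons_eq_cons.mp ((h w).symm.trans (h' w))).2

end IsFixedSection

lemma eq_one_of_forall_isFixedSection_one {g : treeAutGroup d}
    (h : ∀ i, IsFixedSection g 1 i) : g = 1 :=
  Subtype.ext <| Equiv.ext fun
    | [] => apply_nil g
    | i :: w => h i w

end TreeAut

open TreeAut

section StronglyFractal

variable {d : ℕ} {G : Subgroup (treeAutGroup d)} {h t : treeAutGroup d} {i : Fin d}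

lemma isLeftEngelIn_section_of_isLeftEngelIn
    (hfrac : ∀ x ∈ G, ∃ a, a ∈ G ∧ a ∈ levelStab d 1 ∧ IsSection a x i)
    (ht : IsFixedSection h t i) (hEngel : IsLeftEngelIn G h) :
    IsLeftEngelIn G t := by
  intro x hx
  obtain ⟨a, haG, haSt, hax⟩ := hfrac x hx
  obtain ⟨n, hn, han⟩ := hEngel a haG
  refine ⟨n, hn, ((IsFixedSection.one i).unique ?_).symm⟩
  simpa only [han] using (hax.isFixedSection haSt).engel ht n

lemma isLeftEngelIn_of_isLeftEngelIn_sections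
    (hself : ∀ g ∈ G, ∀ i : Fin d, ∃ t ∈ G, IsSection g t i)
    (hG : h ∈ G) (hSt : h ∈ levelStab d 1) (t : Fin d → treeAutGroup d)
    (ht : ∀ i, IsFixedSection h (t i) i) (hEngel : ∀ i, IsLeftEngelIn G (t i)) :
    IsLeftEngelIn G h := by
  intro x hx
  have hyG : engel x h 1 ∈ G := engel_mem hx hG 1
  have hySt : engel x h 1 ∈ levelStab d 1 :=
    (levelStab d 1).mul_mem ((levelStab_normal 1).conj_mem _ ((levelStab d 1).inv_mem hSt) x⁻¹)
      hSt
  choose s hsG hs using hself _ hyG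
  obtain ⟨N, hN⟩ := exists_forall_engel_eq_one fun i =>
    (hEngel i (s i) (hsG i)).imp fun _ => And.right
  have hyN : engel (engel x h 1) h N = 1 := eq_one_of_forall_isFixedSection_one fun i => by
    simpa only [hN i] using ((hs i).isFixedSection hySt).engel (ht i) N
  exact ⟨N + 1, Nat.le_add_left 1 N, by rw [engel_succ_eq_engel_engel_one, hyN]⟩

end StronglyFractal

theorem stmt_12_general (d : ℕ) (G : Subgroup (treeAutGroup d))
    (hself : ∀ g ∈ G, ∀ i : Fin d, ∃ t ∈ G, IsSection g t i)
    (hfrac : ∀ i : Fin d, ∀ x ∈ G, ∃ h, h ∈ G ∧ h ∈ levelStab d 1 ∧ IsSection h x i) :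
    ∀ h, h ∈ G → h ∈ levelStab d 1 →
      (IsLeftEngelIn G h ↔
        ∀ i : Fin d, ∃ t, t ∈ G ∧ IsSection h t i ∧ IsLeftEngelIn G t) := by
  intro h hG hSt
  constructor
  · intro hEngel i
    obtain ⟨t, htG, ht⟩ := hself h hG i
    exact ⟨t, htG, ht,
      isLeftEngelIn_section_of_isLeftEngelIn (hfrac i) (ht.isFixedSection hSt) hEngel⟩
  · intro hsections
    choose t _ ht hEngel using hsections
    exact isLeftEngelIn_of_isLeftEngelIn_sections hself hG hSt t
      (fun i => (ht i).isFixedSection hSt) hEngel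

theorem stmt_12 (d : ℕ) (hd : 2 ≤ d) (G : Subgroup (treeAutGroup d))
    (hself : ∀ g ∈ G, ∀ i : Fin d, ∃ t ∈ G, IsSection g t i)
    (hfrac : ∀ i : Fin d, ∀ x ∈ G, ∃ h, h ∈ G ∧ h ∈ levelStab d 1 ∧ IsSection h x i) :
    ∀ h, h ∈ G → h ∈ levelStab d 1 →
      (IsLeftEngelIn G h ↔
        ∀ i : Fin d, ∃ t, t ∈ G ∧ IsSection h t i ∧ IsLeftEngelIn G t) :=
  stmt_12_general d G hself hfrac
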